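/- Let k ≥ 2 be an integer. Then p is differentiable at every r > 0, and p′(r) = b₀(r) A₀(r) + b₁(r) A₁(r), where b₀(r) = 2k r^{(−3k−1)/(k+1)} ( −(k+1)(k+2)r³ + (k−1)r² + (k+2)(k−1)r + k−1 ) / ( (k+1)(r²+1) ) and b₁(r) = 2k(2k+1) r^{(−3k−1)/(k+1)} ( (k+1)r² − 2(k+2)r + k+1 ) / ( (k+1)(r²+1) ). -/

import Mathlib

open Real MeasureTheory Set intervalIntegral Filter
open Topology

noncomputable def Wfn (k : ℕ) (r t : ℝ) : ℝ :=
  (t * (t + r ^ 2) / (1 - t)) ^ ((1 : ℝ) / ((k : ℝ) + 1))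

noncomputable def a₀ (k : ℕ) (r : ℝ) : ℝ :=
  -((k : ℝ) + 1) * ((k : ℝ) + 2) * r ^ 2 + 2 * (k : ℝ) * ((k : ℝ) + 2) * r - (k : ℝ) * ((k : ℝ) - 1)

noncomputable def a₁ (k : ℕ) : ℝ := 2 * (2 * (k : ℝ) + 1)

noncomputable def periodP (k : ℕ) (r : ℝ) : ℝ :=
  |r| ^ (-(2 * (k : ℝ)) / ((k : ℝ) + 1)) *
    ∫ t in (0 : ℝ)..1, (a₀ k r - a₁ k * t) / Wfn k r t

noncomputable def A0fn (k : ℕ) (r : ℝ) : ℝ := ∫ t in (0 : ℝ)..1, 1 / Wfn k r t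

noncomputable def A1fn (k : ℕ) (r : ℝ) : ℝ := ∫ t in (0 : ℝ)..1, t / Wfn k r t

noncomputable def al (k : ℕ) : ℝ := (1 : ℝ) / ((k : ℝ) + 1)

noncomputable def Gfn (k : ℕ) (x t : ℝ) : ℝ := (t * (t + x ^ 2) / (1 - t)) ^ (-(al k))

noncomputable def d₀ (k : ℕ) (x : ℝ) : ℝ :=
  -2 * ((k : ℝ) + 1) * ((k : ℝ) + 2) * x + 2 * (k : ℝ) * ((k : ℝ) + 2)

lemma al_pos (k : ℕ) : 0 < al k := by
  unfold al; positivity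

lemma al_le_one (k : ℕ) : al k ≤ 1 := by
  unfold al
  rw [div_le_one (by positivity)]
  linarith [Nat.cast_nonneg (α := ℝ) k]

lemma al_lt_one {k : ℕ} (hk : 2 ≤ k) : al k < 1 := by
  have h2 : (2:ℝ) ≤ (k:ℝ) := by exact_mod_cast hk
  unfold al
  rw [div_lt_one (by linarith)]
  linarith

lemma base_pos {x t : ℝ} (ht : 0 < t) (ht1 : t < 1) : 0 < t * (t + x ^ 2) / (1 - t) := by
  apply div_pos
  · nlinarith [sq_nonneg x]
  · linarith

lemma G_eq_div (k : ℕ) (x : ℝ) {t : ℝ} (ht : t ∈ Icc (0:ℝ) 1) (c : ℝ) :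
    c / Wfn k x t = c * Gfn k x t := by
  have hal : al k ≠ 0 := (al_pos k).ne'
  have hne : (((k:ℝ)+1)⁻¹ : ℝ) ≠ 0 := inv_ne_zero (by positivity)
  rcases eq_or_lt_of_le ht.1 with h0 | h0
  · simp [Wfn, Gfn, ← h0, al, Real.zero_rpow hne, Real.zero_rpow (neg_ne_zero.mpr hne)]
  rcases eq_or_lt_of_le ht.2 with h1 | h1
  · simp [Wfn, Gfn, h1, al, Real.zero_rpow hne, Real.zero_rpow (neg_ne_zero.mpr hne)]
  · have hb := base_pos (x := x) h0 h1
    rw [Wfn, Gfn, show (1:ℝ)/((k:ℝ)+1) = al k from rfl,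
      Real.rpow_neg hb.le, div_eq_mul_inv]

lemma G_nonneg (k : ℕ) (x : ℝ) {t : ℝ} (ht : 0 ≤ t) (ht1 : t ≤ 1) : 0 ≤ Gfn k x t := by
  rcases eq_or_lt_of_le ht1 with h1 | h1
  · simp [Gfn, ← h1, Real.zero_rpow (neg_ne_zero.mpr (al_pos k).ne')]
  · apply Real.rpow_nonneg
    apply div_nonneg
    · nlinarith [sq_nonneg x]
    · linarith

lemma G_factor (k : ℕ) (x : ℝ) {t : ℝ} (ht : 0 < t) (ht1 : t < 1) :
    Gfn k x t = t ^ (-(al k)) * (t + x ^ 2) ^ (-(al k)) * (1 - t) ^ (al k) := by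
  have h2 : (0:ℝ) < t + x ^ 2 := by nlinarith [sq_nonneg x]
  have h3 : (0:ℝ) < 1 - t := by linarith
  rw [Gfn, Real.div_rpow (by positivity) h3.le,
    Real.mul_rpow ht.le h2.le, Real.rpow_neg h3.le (al k)]
  field_simp

lemma G_le {k : ℕ} {x t : ℝ} (hx : 0 < x) (ht : 0 < t) (ht1 : t ≤ 1) :
    Gfn k x t ≤ (x ^ 2) ^ (-(al k)) * t ^ (-(al k)) := by
  have hx2 : (0:ℝ) < x ^ 2 := by positivity
  rcases eq_or_lt_of_le ht1 with h1 | h1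
  · rw [Gfn, ← h1]
    simp [Real.zero_rpow (neg_ne_zero.mpr (al_pos k).ne')]
    positivity
  · rw [G_factor k x ht h1]
    have hA : (t + x ^ 2) ^ (-(al k)) ≤ (x ^ 2) ^ (-(al k)) :=
      Real.rpow_le_rpow_of_nonpos hx2 (by linarith) (neg_nonpos.mpr (al_pos k).le)
    have hB : (1 - t) ^ (al k) ≤ 1 :=
      Real.rpow_le_one (by linarith) (by linarith) (al_pos k).le
    have ht' : (0:ℝ) ≤ t ^ (-(al k)) := Real.rpow_nonneg ht.le _
    calc t ^ (-(al k)) * (t + x ^ 2) ^ (-(al k)) * (1 - t) ^ (al k)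
        ≤ t ^ (-(al k)) * (x ^ 2) ^ (-(al k)) * 1 := by
          apply mul_le_mul
          · exact mul_le_mul_of_nonneg_left hA ht'
          · exact hB
          · exact Real.rpow_nonneg (by linarith) _
          · positivity
      _ = (x ^ 2) ^ (-(al k)) * t ^ (-(al k)) := by ring

lemma contOn_G (k : ℕ) (x : ℝ) : ContinuousOn (fun t => Gfn k x t) (Ioo (0:ℝ) 1) := by
  intro t ht
  have hb := base_pos (x := x) ht.1 ht.2
  apply ContinuousAt.continuousWithinAt
  have hbase : ContinuousAt (fun t : ℝ => t * (t + x ^ 2) / (1 - t)) t := by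
    apply ContinuousAt.div
    · exact continuousAt_id.mul (continuousAt_id.add continuousAt_const)
    · exact continuousAt_const.sub continuousAt_id
    · intro h; rw [sub_eq_zero] at h; exact absurd h.symm ht.2.ne
  have hrp : ContinuousAt (fun y : ℝ => y ^ (-(al k))) (t * (t + x ^ 2) / (1 - t)) :=
    Real.continuousAt_rpow_const _ _ (Or.inl hb.ne')
  show ContinuousAt ((fun y : ℝ => y ^ (-(al k))) ∘ (fun t : ℝ => t * (t + x ^ 2) / (1 - t))) t
  exact ContinuousAt.comp (g := fun y : ℝ => y ^ (-(al k)))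
    (f := fun t : ℝ => t * (t + x ^ 2) / (1 - t)) (x := t) hrp hbase

lemma ae_uIoc_Ioo : ∀ᵐ t ∂(volume : Measure ℝ), t ∈ Set.uIoc (0:ℝ) 1 → t ∈ Ioo (0:ℝ) 1 := by
  have h1 : ∀ᵐ t ∂(volume : Measure ℝ), t ≠ 1 := by
    refine ae_iff.mpr ?_
    simp only [ne_eq, not_not, Set.setOf_eq_eq_singleton]
    exact measure_singleton 1
  filter_upwards [h1] with t ht hmem
  rw [Set.uIoc_of_le (zero_le_one)] at hmem
  exact ⟨hmem.1, lt_of_le_of_ne hmem.2 ht⟩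

lemma integrable_aux {k : ℕ} (hk : 2 ≤ k) {x : ℝ} (hx : 0 < x) {ρ : ℝ → ℝ}
    (hρ : ContinuousOn ρ (Ioo (0:ℝ) 1)) {c : ℝ}
    (hc : ∀ t ∈ Ioc (0:ℝ) 1, |ρ t| ≤ c) :
    IntervalIntegrable (fun t => ρ t * Gfn k x t) volume 0 1 := by
  have hc0 : 0 ≤ c := (abs_nonneg _).trans (hc 1 ⟨one_pos, le_refl 1⟩)
  rw [intervalIntegrable_iff, uIoc_of_le (zero_le_one)]
  have hrestr : volume.restrict (Ioc (0:ℝ) 1) = volume.restrict (Ioo (0:ℝ) 1) :=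
    (Measure.restrict_congr_set Ioo_ae_eq_Ioc).symm
  have hmeas : AEStronglyMeasurable (fun t => ρ t * Gfn k x t)
      (volume.restrict (Ioc (0:ℝ) 1)) := by
    rw [hrestr]
    exact (hρ.mul (contOn_G k x)).aestronglyMeasurable measurableSet_Ioo
  have hg : IntegrableOn (fun t => (c * (x ^ 2) ^ (-(al k))) * t ^ (-(al k)))
      (Ioc (0:ℝ) 1) := by
    have h1 := intervalIntegral.intervalIntegrable_rpow' (a := 0) (b := 1)
      (r := -(al k)) (by linarith [al_lt_one hk])
    rw [intervalIntegrable_iff, uIoc_of_le zero_le_one] at h1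
    exact h1.const_mul _
  refine hg.mono' hmeas ?_
  rw [ae_restrict_iff' measurableSet_Ioc]
  refine ae_of_all _ (fun t ht => ?_)
  have hGn := G_nonneg k x ht.1.le ht.2
  rw [Real.norm_eq_abs, abs_mul, abs_of_nonneg hGn]
  calc |ρ t| * Gfn k x t ≤ c * ((x ^ 2) ^ (-(al k)) * t ^ (-(al k))) := by
        apply mul_le_mul (hc t ht) (G_le hx ht.1 ht.2) hGn hc0
    _ = (c * (x ^ 2) ^ (-(al k))) * t ^ (-(al k)) := by ring

lemma hasDerivAt_F (k : ℕ) {x t : ℝ} (hx : 0 < x) (ht : t ∈ Ioo (0:ℝ) 1) :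
    HasDerivAt (fun y => (a₀ k y - a₁ k * t) * Gfn k y t)
      ((d₀ k x - (a₀ k x - a₁ k * t) * (2 * al k * x / (t + x ^ 2))) * Gfn k x t) x := by
  obtain ⟨ht0, ht1⟩ := ht
  have htx : (0:ℝ) < t + x ^ 2 := by nlinarith [sq_nonneg x]
  have h1t : (0:ℝ) < 1 - t := by linarith
  have hb : 0 < t * (t + x ^ 2) / (1 - t) := base_pos ht0 ht1
  -- derivative of the base in x
  have hbase : HasDerivAt (fun y : ℝ => t * (t + y ^ 2) / (1 - t))
      (t * (2 * x) / (1 - t)) x := by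
    have h := (((hasDerivAt_pow 2 x).const_add t).const_mul t).div_const (1 - t)
    refine h.congr_deriv ?_
    ring
  have hG : HasDerivAt (fun y : ℝ => (t * (t + y ^ 2) / (1 - t)) ^ (-(al k)))
      (t * (2 * x) / (1 - t) * (-(al k)) * (t * (t + x ^ 2) / (1 - t)) ^ (-(al k) - 1)) x :=
    hbase.rpow_const (Or.inl hb.ne')
  have ha : HasDerivAt (fun y : ℝ => a₀ k y - a₁ k * t) (d₀ k x) x := by
    have h : HasDerivAt (fun y : ℝ =>
        -((k : ℝ) + 1) * ((k : ℝ) + 2) * y ^ 2 + 2 * (k : ℝ) * ((k : ℝ) + 2) * y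
          - ((k : ℝ) * ((k : ℝ) - 1) + a₁ k * t))
        (-((k : ℝ) + 1) * ((k : ℝ) + 2) * (2 * x) + 2 * (k : ℝ) * ((k : ℝ) + 2)) x := by
      have h1 := ((hasDerivAt_pow 2 x).const_mul (-((k : ℝ) + 1) * ((k : ℝ) + 2))).add
        ((hasDerivAt_id x).const_mul (2 * (k : ℝ) * ((k : ℝ) + 2)))
      have h2 := h1.sub_const ((k : ℝ) * ((k : ℝ) - 1) + a₁ k * t)
      refine h2.congr_deriv ?_
      ring
    have heq : (fun y : ℝ => a₀ k y - a₁ k * t) = fun y : ℝ =>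
        -((k : ℝ) + 1) * ((k : ℝ) + 2) * y ^ 2 + 2 * (k : ℝ) * ((k : ℝ) + 2) * y
          - ((k : ℝ) * ((k : ℝ) - 1) + a₁ k * t) := by
      funext y; unfold a₀; ring
    rw [heq]
    convert h using 1
    unfold d₀; ring
  have hprod := ha.mul hG
  have hGfn : (fun y : ℝ => (a₀ k y - a₁ k * t) * Gfn k y t)
      = fun y => (a₀ k y - a₁ k * t) * (t * (t + y ^ 2) / (1 - t)) ^ (-(al k)) := rfl
  rw [hGfn]
  refine hprod.congr_deriv ?_
  rw [show -(al k) - 1 = -(al k) + (-1) by ring, Real.rpow_add hb, Real.rpow_neg_one, Gfn]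
  have h2 : t ≠ 0 := ht0.ne'
  have h3 : (1:ℝ) - t ≠ 0 := h1t.ne'
  field_simp
  ring

lemma ibp {k : ℕ} (hk : 2 ≤ k) {r : ℝ} (hr : 0 < r) :
    (al k - 2) * (∫ t in (0:ℝ)..1, t * Gfn k r t)
      + (1 - 2 * al k - al k * r ^ 2) * (∫ t in (0:ℝ)..1, 1 * Gfn k r t)
      + (al k * r ^ 2 * (1 + r ^ 2)) * (∫ t in (0:ℝ)..1, (1 / (t + r ^ 2)) * Gfn k r t)
      = 0 := by
  have hal := al_pos k
  have hal1 := al_lt_one hk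
  set a := al k with ha
  set φ : ℝ → ℝ := fun t => (1 - t) ^ (a + 1) * (t ^ (1 - a) * (t + r ^ 2) ^ (-a)) with hφ
  set ψ : ℝ → ℝ := fun t =>
    (((a - 2) * t ^ 2 + (1 - 2 * a - 2 * r ^ 2) * t + (1 - a) * r ^ 2) / (t + r ^ 2))
      * Gfn k r t with hψ
  -- continuity of φ on Icc
  have hcont : ContinuousOn φ (Icc (0:ℝ) 1) := by
    intro t ht
    apply ContinuousAt.continuousWithinAt
    have htr : t + r ^ 2 ≠ 0 := by nlinarith [ht.1, sq_nonneg r]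
    have c1 : ContinuousAt (fun t : ℝ => (1 - t) ^ (a + 1)) t := by
      have hrp : ContinuousAt (fun y : ℝ => y ^ (a + 1)) (1 - t) :=
        Real.continuousAt_rpow_const _ _ (Or.inr (by linarith))
      exact ContinuousAt.comp (g := fun y : ℝ => y ^ (a + 1))
        (f := fun t : ℝ => 1 - t) (x := t) hrp (continuousAt_const.sub continuousAt_id)
    have c2 : ContinuousAt (fun t : ℝ => t ^ (1 - a)) t :=
      Real.continuousAt_rpow_const _ _ (Or.inr (by linarith))
    have c3 : ContinuousAt (fun t : ℝ => (t + r ^ 2) ^ (-a)) t := by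
      have hrp : ContinuousAt (fun y : ℝ => y ^ (-a)) (t + r ^ 2) :=
        Real.continuousAt_rpow_const _ _ (Or.inl htr)
      exact ContinuousAt.comp (g := fun y : ℝ => y ^ (-a))
        (f := fun t : ℝ => t + r ^ 2) (x := t) hrp (continuousAt_id.add continuousAt_const)
    exact c1.mul (c2.mul c3)
  -- derivative of φ on Ioo
  have hderiv : ∀ t ∈ Ioo (0:ℝ) 1, HasDerivAt φ (ψ t) t := by
    intro t ht
    obtain ⟨ht0, ht1⟩ := ht
    have h1t : (0:ℝ) < 1 - t := by linarith
    have htr : (0:ℝ) < t + r ^ 2 := by positivity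
    have h1 : HasDerivAt (fun t : ℝ => (1 - t) ^ (a + 1))
        (-1 * (a + 1) * (1 - t) ^ (a + 1 - 1)) t :=
      ((hasDerivAt_id t).const_sub 1).rpow_const (Or.inl h1t.ne')
    have h2 : HasDerivAt (fun t : ℝ => t ^ (1 - a))
        ((1 - a) * t ^ (1 - a - 1)) t :=
      Real.hasDerivAt_rpow_const (Or.inl ht0.ne')
    have h3 : HasDerivAt (fun t : ℝ => (t + r ^ 2) ^ (-a))
        (1 * (-a) * (t + r ^ 2) ^ (-a - 1)) t :=
      ((hasDerivAt_id t).add_const (r ^ 2)).rpow_const (Or.inl htr.ne')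
    have h := h1.mul (h2.mul h3)
    refine h.congr_deriv ?_
    simp only [hψ, Pi.mul_apply]
    have e1 : (1 - t) ^ (a + 1 - 1) = (1 - t) ^ a := by norm_num
    have e2 : t ^ (1 - a - 1) = t ^ (-a) := by norm_num
    have e3 : (1 - t) ^ (a + 1) = (1 - t) ^ a * (1 - t) := by
      rw [Real.rpow_add h1t, Real.rpow_one]
    have e4 : t ^ (1 - a) = t * t ^ (-a) := by
      rw [show (1:ℝ) - a = 1 + (-a) by ring, Real.rpow_add ht0, Real.rpow_one]
    have e5 : (t + r ^ 2) ^ (-a - 1) = (t + r ^ 2) ^ (-a) * (t + r ^ 2)⁻¹ := by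
      rw [show -a - 1 = -a + (-1) by ring, Real.rpow_add htr, Real.rpow_neg_one]
    rw [e1, e2, e3, e4, e5, G_factor k r ht0 ht1, ← ha]
    field_simp
    ring
  -- integrability of ψ
  have hint : IntervalIntegrable ψ volume 0 1 := by
    have hρ : ContinuousOn (fun t => ((a - 2) * t ^ 2 + (1 - 2 * a - 2 * r ^ 2) * t
        + (1 - a) * r ^ 2) / (t + r ^ 2)) (Ioo (0:ℝ) 1) := by
      apply ContinuousOn.div (by fun_prop) (by fun_prop)
      intro t ht; nlinarith [ht.1, sq_nonneg r]
    refine integrable_aux hk hr hρ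
      (c := (|a - 2| + |1 - 2 * a - 2 * r ^ 2| + |(1 - a) * r ^ 2|) / r ^ 2) ?_
    intro t ht
    obtain ⟨ht0, ht1⟩ := ht
    rw [abs_div]
    apply div_le_div₀ (by positivity) ?_ (by positivity)
    · rw [abs_of_pos (by positivity : (0:ℝ) < t + r ^ 2)]; nlinarith
    · calc |(a - 2) * t ^ 2 + (1 - 2 * a - 2 * r ^ 2) * t + (1 - a) * r ^ 2|
          ≤ |(a - 2) * t ^ 2 + (1 - 2 * a - 2 * r ^ 2) * t| + |(1 - a) * r ^ 2| :=
            abs_add_le _ _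
        _ ≤ |(a - 2) * t ^ 2| + |(1 - 2 * a - 2 * r ^ 2) * t| + |(1 - a) * r ^ 2| := by
            linarith [abs_add_le ((a - 2) * t ^ 2) ((1 - 2 * a - 2 * r ^ 2) * t)]
        _ ≤ |a - 2| + |1 - 2 * a - 2 * r ^ 2| + |(1 - a) * r ^ 2| := by
            rw [abs_mul, abs_mul]
            have g1 : |t ^ 2| ≤ 1 := by rw [abs_of_pos (by positivity)]; nlinarith
            have g2 : |t| ≤ 1 := by rw [abs_of_pos ht0]; linarith
            have := mul_le_of_le_one_right (abs_nonneg (a - 2)) g1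
            have := mul_le_of_le_one_right (abs_nonneg (1 - 2 * a - 2 * r ^ 2)) g2
            linarith
  -- FTC
  have hFTC := intervalIntegral.integral_eq_sub_of_hasDerivAt_of_le zero_le_one hcont hderiv hint
  have hφ0 : φ 0 = 0 := by
    rw [hφ]
    simp [Real.zero_rpow (by linarith : (1:ℝ) - a ≠ 0)]
  have hφ1 : φ 1 = 0 := by
    rw [hφ]
    simp [Real.zero_rpow (by linarith : a + 1 ≠ 0)]
  rw [hφ1, hφ0, sub_zero] at hFTC
  -- linearity decomposition of ∫ ψ
  have hI1 : IntervalIntegrable (fun t => t * Gfn k r t) volume 0 1 := by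
    refine integrable_aux hk hr (ρ := fun t : ℝ => t) (by fun_prop) (c := 1) ?_
    intro t ht; rw [abs_of_pos ht.1]; exact ht.2
  have hI0 : IntervalIntegrable (fun t => 1 * Gfn k r t) volume 0 1 := by
    refine integrable_aux hk hr (ρ := fun t : ℝ => (1:ℝ)) (by fun_prop) (c := 1) ?_
    intro t _; simp
  have hIJ : IntervalIntegrable (fun t => (1 / (t + r ^ 2)) * Gfn k r t) volume 0 1 := by
    have hρ : ContinuousOn (fun t : ℝ => 1 / (t + r ^ 2)) (Ioo (0:ℝ) 1) := by
      apply ContinuousOn.div continuousOn_const (by fun_prop)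
      intro t ht; nlinarith [ht.1, sq_nonneg r]
    refine integrable_aux hk hr hρ (c := 1 / r ^ 2) ?_
    intro t ht
    have h1 : (0:ℝ) < t + r ^ 2 := by nlinarith [ht.1, sq_nonneg r]
    rw [abs_of_pos (by positivity)]
    apply div_le_div₀ zero_le_one le_rfl (by positivity) (by nlinarith [ht.1])
  have hsplit : ∫ t in (0:ℝ)..1, ψ t
      = (a - 2) * (∫ t in (0:ℝ)..1, t * Gfn k r t)
        + (1 - 2 * a - a * r ^ 2) * (∫ t in (0:ℝ)..1, 1 * Gfn k r t)
        + (a * r ^ 2 * (1 + r ^ 2)) * (∫ t in (0:ℝ)..1, (1 / (t + r ^ 2)) * Gfn k r t) := by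
    have hcongr : EqOn ψ (fun t =>
        (a - 2) * (t * Gfn k r t) + (1 - 2 * a - a * r ^ 2) * (1 * Gfn k r t)
          + (a * r ^ 2 * (1 + r ^ 2)) * ((1 / (t + r ^ 2)) * Gfn k r t)) (uIcc (0:ℝ) 1) := by
      intro t ht
      rw [uIcc_of_le zero_le_one] at ht
      have htr : t + r ^ 2 ≠ 0 := by nlinarith [ht.1, sq_nonneg r]
      rw [hψ]
      field_simp
      ring
    rw [intervalIntegral.integral_congr hcongr,
      intervalIntegral.integral_add (((hI1.const_mul _).add (hI0.const_mul _))) (hIJ.const_mul _),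
      intervalIntegral.integral_add (hI1.const_mul _) (hI0.const_mul _)]
    simp only [intervalIntegral.integral_const_mul, one_mul]
  rw [hsplit] at hFTC
  linarith [hFTC]

noncomputable def mexp (k : ℕ) : ℝ := -(2 * (k : ℝ)) / ((k : ℝ) + 1)

lemma aesm_coef_mul_G (k : ℕ) (x : ℝ) {ρ : ℝ → ℝ} (hρ : ContinuousOn ρ (Ioo (0:ℝ) 1)) :
    AEStronglyMeasurable (fun t => ρ t * Gfn k x t) (volume.restrict (Set.uIoc (0:ℝ) 1)) := by
  rw [uIoc_of_le (zero_le_one), ← Measure.restrict_congr_set Ioo_ae_eq_Ioc]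
  exact (hρ.mul (contOn_G k x)).aestronglyMeasurable measurableSet_Ioo

set_option maxHeartbeats 2000000 in
theorem period_hasDerivAt' (k : ℕ) (hk : 2 ≤ k) :
    ∀ r : ℝ, 0 < r →
      HasDerivAt (periodP k)
        (2 * (k : ℝ) * r ^ ((-3 * (k : ℝ) - 1) / ((k : ℝ) + 1)) *
            (-((k : ℝ) + 1) * ((k : ℝ) + 2) * r ^ 3 + ((k : ℝ) - 1) * r ^ 2 +
              ((k : ℝ) + 2) * ((k : ℝ) - 1) * r + (k : ℝ) - 1) /
            (((k : ℝ) + 1) * (r ^ 2 + 1)) * A0fn k r +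
          2 * (k : ℝ) * (2 * (k : ℝ) + 1) * r ^ ((-3 * (k : ℝ) - 1) / ((k : ℝ) + 1)) *
            (((k : ℝ) + 1) * r ^ 2 - 2 * ((k : ℝ) + 2) * r + (k : ℝ) + 1) /
            (((k : ℝ) + 1) * (r ^ 2 + 1)) * A1fn k r) r := by
  intro r hr
  have hal := al_pos k
  have halle := al_le_one k
  have hal1 := al_lt_one hk
  have hK0 : (0:ℝ) ≤ (k:ℝ) := Nat.cast_nonneg k
  have hK2 : (2:ℝ) ≤ (k:ℝ) := by exact_mod_cast hk
  have hrne : r ≠ 0 := hr.ne'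
  -- constants for domination
  set K := (k:ℝ) with hKdef
  set D1 : ℝ := 2 * (K + 1) * (K + 2) * (2 * r) + 2 * K * (K + 2) with hD1
  set D2 : ℝ := (K + 1) * (K + 2) * (2 * r) ^ 2 + 2 * K * (K + 2) * (2 * r)
      + K * (K - 1) + 2 * (2 * K + 1) with hD2
  have hD1nn : 0 ≤ D1 := by
    rw [hD1]
    nlinarith [mul_nonneg (mul_nonneg (by linarith : (0:ℝ) ≤ 2 * (K + 1))
      (by linarith : (0:ℝ) ≤ K + 2)) (by linarith : (0:ℝ) ≤ 2 * r),
      mul_nonneg (by linarith : (0:ℝ) ≤ 2 * K) (by linarith : (0:ℝ) ≤ K + 2)]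
  have hD2nn : 0 ≤ D2 := by
    rw [hD2]
    nlinarith [mul_nonneg (mul_nonneg (by linarith : (0:ℝ) ≤ K + 1)
      (by linarith : (0:ℝ) ≤ K + 2)) (by positivity : (0:ℝ) ≤ (2 * r) ^ 2),
      mul_nonneg (mul_nonneg (by linarith : (0:ℝ) ≤ 2 * K) (by linarith : (0:ℝ) ≤ K + 2))
        (by linarith : (0:ℝ) ≤ 2 * r),
      mul_nonneg (by linarith : (0:ℝ) ≤ K) (by linarith : (0:ℝ) ≤ K - 1)]
  set C : ℝ := (D1 + D2 * (4 / r)) * ((r / 2) ^ 2) ^ (-(al k)) with hC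
  -- the dominated-derivative theorem
  have key := intervalIntegral.hasDerivAt_integral_of_dominated_loc_of_deriv_le
    (μ := volume) (a := 0) (b := 1) (x₀ := r) (s := Metric.ball r (r / 2))
    (F := fun x t => (a₀ k x - a₁ k * t) * Gfn k x t)
    (F' := fun x t => (d₀ k x - (a₀ k x - a₁ k * t) * (2 * al k * x / (t + x ^ 2))) * Gfn k x t)
    (bound := fun t => C * t ^ (-(al k)))
    (Metric.ball_mem_nhds r (by positivity))
    (Eventually.of_forall fun x => aesm_coef_mul_G k x (by fun_prop))
    (by -- integrability of F r
      refine integrable_aux hk hr (ρ := fun t => a₀ k r - a₁ k * t) (by fun_prop)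
        (c := |a₀ k r| + |a₁ k|) ?_
      intro t ht
      have h1 := abs_add_le (a₀ k r) (-(a₁ k * t))
      rw [abs_neg, abs_mul] at h1
      have g2 : |t| ≤ 1 := by rw [abs_of_pos ht.1]; exact ht.2
      have := mul_le_of_le_one_right (abs_nonneg (a₁ k)) g2
      calc |a₀ k r - a₁ k * t| = |a₀ k r + -(a₁ k * t)| := by rw [sub_eq_add_neg]
        _ ≤ |a₀ k r| + |a₁ k| * |t| := h1
        _ ≤ |a₀ k r| + |a₁ k| := by linarith)
    (by -- measurability of F' r
      apply aesm_coef_mul_G k r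
      apply ContinuousOn.sub continuousOn_const
      apply ContinuousOn.mul (by fun_prop)
      apply ContinuousOn.div continuousOn_const (by fun_prop)
      intro t ht; nlinarith [ht.1, sq_nonneg r])
    (by -- the uniform bound
      filter_upwards [ae_uIoc_Ioo] with t hIoo htI x hx
      obtain ⟨ht0, ht1⟩ := hIoo htI
      rw [Metric.mem_ball, Real.dist_eq, abs_lt] at hx
      have hx1 : r / 2 < x := by linarith
      have hx2 : x < 2 * r := by linarith
      have hx0 : 0 < x := by linarith
      have htx : (0:ℝ) < t + x ^ 2 := by positivity
      have hb1 : |d₀ k x| ≤ D1 := by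
        rw [abs_le, hD1]; unfold d₀; rw [← hKdef]
        constructor <;>
          nlinarith [mul_nonneg (mul_nonneg (by linarith : (0:ℝ) ≤ 2 * (K + 1))
              (by linarith : (0:ℝ) ≤ K + 2)) (by linarith : (0:ℝ) ≤ 2 * r - x),
            mul_nonneg (mul_nonneg (by linarith : (0:ℝ) ≤ 2 * (K + 1))
              (by linarith : (0:ℝ) ≤ K + 2)) hx0.le,
            mul_nonneg (mul_nonneg (by linarith : (0:ℝ) ≤ 2 * (K + 1))
              (by linarith : (0:ℝ) ≤ K + 2)) (by linarith : (0:ℝ) ≤ 2 * r),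
            mul_nonneg (by linarith : (0:ℝ) ≤ 2 * K) (by linarith : (0:ℝ) ≤ K + 2)]
      have hb2 : |a₀ k x - a₁ k * t| ≤ D2 := by
        rw [abs_le, hD2]; unfold a₀ a₁; rw [← hKdef]
        have hKK : (0:ℝ) ≤ (K + 1) * (K + 2) := by nlinarith
        have hKK2 : (0:ℝ) ≤ 2 * K * (K + 2) := by nlinarith
        constructor <;>
          nlinarith [mul_nonneg hKK (sq_nonneg x),
            mul_nonneg hKK (by positivity : (0:ℝ) ≤ (2 * r) ^ 2),
            mul_nonneg hKK (mul_nonneg (by linarith : (0:ℝ) ≤ 2 * r - x)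
              (by linarith : (0:ℝ) ≤ 2 * r + x)),
            mul_nonneg hKK2 (by linarith : (0:ℝ) ≤ 2 * r - x),
            mul_nonneg hKK2 hx0.le,
            mul_nonneg hKK2 (by linarith : (0:ℝ) ≤ 2 * r),
            mul_nonneg (by linarith : (0:ℝ) ≤ K) (by linarith : (0:ℝ) ≤ K - 1),
            mul_nonneg (by linarith : (0:ℝ) ≤ 2 * (2 * K + 1)) ht0.le,
            mul_nonneg (by linarith : (0:ℝ) ≤ 2 * (2 * K + 1)) (by linarith : (0:ℝ) ≤ 1 - t)]
      have hb3 : |2 * al k * x / (t + x ^ 2)| ≤ 4 / r := by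
        rw [abs_of_nonneg (by positivity), div_le_div_iff₀ htx hr]
        nlinarith [mul_nonneg (sub_nonneg.mpr halle) (mul_nonneg hx0.le hr.le),
          mul_nonneg hx0.le (by linarith : (0:ℝ) ≤ 2 * x - r)]
      have hcoef : |d₀ k x - (a₀ k x - a₁ k * t) * (2 * al k * x / (t + x ^ 2))|
          ≤ D1 + D2 * (4 / r) := by
        have h1 := abs_add_le (d₀ k x) (-((a₀ k x - a₁ k * t) * (2 * al k * x / (t + x ^ 2))))
        rw [abs_neg, abs_mul] at h1
        have h2 : |a₀ k x - a₁ k * t| * |2 * al k * x / (t + x ^ 2)| ≤ D2 * (4 / r) :=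
          mul_le_mul hb2 hb3 (abs_nonneg _) hD2nn
        calc |d₀ k x - (a₀ k x - a₁ k * t) * (2 * al k * x / (t + x ^ 2))|
            = |d₀ k x + -((a₀ k x - a₁ k * t) * (2 * al k * x / (t + x ^ 2)))| := by
              rw [sub_eq_add_neg]
          _ ≤ |d₀ k x| + |a₀ k x - a₁ k * t| * |2 * al k * x / (t + x ^ 2)| := h1
          _ ≤ D1 + D2 * (4 / r) := by linarith
      have hGb : Gfn k x t ≤ ((r / 2) ^ 2) ^ (-(al k)) * t ^ (-(al k)) := by
        refine (G_le hx0 ht0 ht1.le).trans ?_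
        have h1 : (x ^ 2) ^ (-(al k)) ≤ ((r / 2) ^ 2) ^ (-(al k)) :=
          Real.rpow_le_rpow_of_nonpos (by positivity) (by nlinarith) (neg_nonpos.mpr hal.le)
        exact mul_le_mul_of_nonneg_right h1 (Real.rpow_nonneg ht0.le _)
      have hGnn := G_nonneg k x ht0.le ht1.le
      rw [Real.norm_eq_abs, abs_mul, abs_of_nonneg hGnn]
      calc |d₀ k x - (a₀ k x - a₁ k * t) * (2 * al k * x / (t + x ^ 2))| * Gfn k x t
          ≤ (D1 + D2 * (4 / r)) * (((r / 2) ^ 2) ^ (-(al k)) * t ^ (-(al k))) :=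
            mul_le_mul hcoef hGb hGnn (by positivity)
        _ = C * t ^ (-(al k)) := by rw [hC]; ring)
    ((intervalIntegral.intervalIntegrable_rpow' (by linarith)).const_mul C)
    (by -- differentiability
      filter_upwards [ae_uIoc_Ioo] with t hIoo htI x hx
      rw [Metric.mem_ball, Real.dist_eq, abs_lt] at hx
      exact hasDerivAt_F k (by linarith [hx.1] : 0 < x) (hIoo htI))
  -- derivative of the rpow prefactor
  have hpow : HasDerivAt (fun x : ℝ => x ^ mexp k) (mexp k * r ^ (mexp k - 1)) r :=
    Real.hasDerivAt_rpow_const (Or.inl hrne)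
  have hmul := hpow.mul key.2
  -- identify with periodP near r
  have hev : (fun x => x ^ mexp k * ∫ t in (0:ℝ)..1, (a₀ k x - a₁ k * t) * Gfn k x t)
      =ᶠ[𝓝 r] periodP k := by
    filter_upwards [eventually_gt_nhds hr] with x hx
    have hcongr : (∫ t in (0:ℝ)..1, (a₀ k x - a₁ k * t) * Gfn k x t)
        = ∫ t in (0:ℝ)..1, (a₀ k x - a₁ k * t) / Wfn k x t := by
      refine intervalIntegral.integral_congr fun t ht => ?_
      rw [uIcc_of_le zero_le_one] at ht
      exact (G_eq_div k x ht _).symm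
    rw [hcongr]
    unfold periodP mexp
    rw [abs_of_pos hx]
  have hfinal := hmul.congr_of_eventuallyEq hev.symm
  -- now rewrite the derivative value
  set A0G := ∫ t in (0:ℝ)..1, Gfn k r t with hA0G
  set A1G := ∫ t in (0:ℝ)..1, t * Gfn k r t with hA1G
  set JG := ∫ t in (0:ℝ)..1, (1 / (t + r ^ 2)) * Gfn k r t with hJG
  have hI1 : IntervalIntegrable (fun t => t * Gfn k r t) volume 0 1 := by
    refine integrable_aux hk hr (ρ := fun t : ℝ => t) (by fun_prop) (c := 1) ?_
    intro t ht; rw [abs_of_pos ht.1]; exact ht.2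
  have hI0 : IntervalIntegrable (fun t => 1 * Gfn k r t) volume 0 1 := by
    refine integrable_aux hk hr (ρ := fun t : ℝ => (1:ℝ)) (by fun_prop) (c := 1) ?_
    intro t _; simp
  have hIJ : IntervalIntegrable (fun t => (1 / (t + r ^ 2)) * Gfn k r t) volume 0 1 := by
    have hρ : ContinuousOn (fun t : ℝ => 1 / (t + r ^ 2)) (Ioo (0:ℝ) 1) := by
      apply ContinuousOn.div continuousOn_const (by fun_prop)
      intro t ht; nlinarith [ht.1, sq_nonneg r]
    refine integrable_aux hk hr hρ (c := 1 / r ^ 2) ?_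
    intro t ht
    have h1 : (0:ℝ) < t + r ^ 2 := by nlinarith [ht.1, sq_nonneg r]
    rw [abs_of_pos (by positivity)]
    apply div_le_div₀ zero_le_one le_rfl (by positivity) (by nlinarith [ht.1])
  have hA0 : A0fn k r = A0G := by
    refine intervalIntegral.integral_congr fun t ht => ?_
    rw [uIcc_of_le zero_le_one] at ht
    exact (G_eq_div k r ht 1).trans (one_mul _)
  have hA1 : A1fn k r = A1G := by
    refine intervalIntegral.integral_congr fun t ht => ?_
    rw [uIcc_of_le zero_le_one] at ht
    exact G_eq_div k r ht t
  have hIA : (∫ t in (0:ℝ)..1, (a₀ k r - a₁ k * t) * Gfn k r t)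
      = a₀ k r * A0G - a₁ k * A1G := by
    have e : EqOn (fun t => (a₀ k r - a₁ k * t) * Gfn k r t)
        (fun t => a₀ k r * (1 * Gfn k r t) - a₁ k * (t * Gfn k r t)) (uIcc (0:ℝ) 1) :=
      fun t _ => by ring
    rw [intervalIntegral.integral_congr e,
      intervalIntegral.integral_sub (hI0.const_mul _) (hI1.const_mul _)]
    simp only [intervalIntegral.integral_const_mul, one_mul]
    rfl
  have hIB : (∫ t in (0:ℝ)..1,
        (d₀ k r - (a₀ k r - a₁ k * t) * (2 * al k * r / (t + r ^ 2))) * Gfn k r t)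
      = (d₀ k r + 2 * al k * r * a₁ k) * A0G
        - (2 * al k * r * (a₀ k r + a₁ k * r ^ 2)) * JG := by
    have e : EqOn (fun t => (d₀ k r - (a₀ k r - a₁ k * t) * (2 * al k * r / (t + r ^ 2)))
          * Gfn k r t)
        (fun t => (d₀ k r + 2 * al k * r * a₁ k) * (1 * Gfn k r t)
          - (2 * al k * r * (a₀ k r + a₁ k * r ^ 2)) * ((1 / (t + r ^ 2)) * Gfn k r t))
        (uIcc (0:ℝ) 1) := by
      intro t ht
      rw [uIcc_of_le zero_le_one] at ht
      have htr : t + r ^ 2 ≠ 0 := by nlinarith [ht.1, sq_nonneg r]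
      field_simp
      ring
    rw [intervalIntegral.integral_congr e,
      intervalIntegral.integral_sub (hI0.const_mul _) (hIJ.const_mul _)]
    simp only [intervalIntegral.integral_const_mul, one_mul]
    rfl
  have hibp := ibp hk hr
  simp only [one_mul] at hibp
  rw [← hA1G, ← hA0G, ← hJG] at hibp
  have hJval : JG = ((2 - al k) * A1G - (1 - 2 * al k - al k * r ^ 2) * A0G)
      / (al k * r ^ 2 * (1 + r ^ 2)) := by
    have hne : al k * r ^ 2 * (1 + r ^ 2) ≠ 0 := by positivity
    field_simp
    linarith [hibp]
  -- final identification
  refine hfinal.congr_deriv ?_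
  rw [hIA, hIB, hJval, hA0, hA1]
  have hKne : K + 1 ≠ 0 := by positivity
  have hexp : (-3 * K - 1) / (K + 1) = mexp k - 1 := by
    unfold mexp
    rw [← hKdef]
    field_simp
    ring
  have hpow2 : r ^ mexp k = r ^ (mexp k - 1) * r := by
    nth_rewrite 1 [show mexp k = (mexp k - 1) + 1 by ring]
    rw [Real.rpow_add_one hrne]
  rw [hexp, hpow2]
  set Q := r ^ (mexp k - 1) with hQ
  unfold mexp al a₀ a₁ d₀
  rw [← hKdef]
  have h3 : r ^ 2 + 1 ≠ 0 := by positivity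
  have h4 : (1:ℝ) + r ^ 2 ≠ 0 := by positivity
  field_simp
  ring

/-- `p` is differentiable at every `r > 0` with derivative `b₀ A₀ + b₁ A₁`. -/
theorem period_hasDerivAt (k : ℕ) (hk : 2 ≤ k) :
    ∀ r : ℝ, 0 < r →
      HasDerivAt (periodP k)
        (2 * (k : ℝ) * r ^ ((-3 * (k : ℝ) - 1) / ((k : ℝ) + 1)) *
            (-((k : ℝ) + 1) * ((k : ℝ) + 2) * r ^ 3 + ((k : ℝ) - 1) * r ^ 2 +
              ((k : ℝ) + 2) * ((k : ℝ) - 1) * r + (k : ℝ) - 1) /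
            (((k : ℝ) + 1) * (r ^ 2 + 1)) * A0fn k r +
          2 * (k : ℝ) * (2 * (k : ℝ) + 1) * r ^ ((-3 * (k : ℝ) - 1) / ((k : ℝ) + 1)) *
            (((k : ℝ) + 1) * r ^ 2 - 2 * ((k : ℝ) + 2) * r + (k : ℝ) + 1) /
            (((k : ℝ) + 1) * (r ^ 2 + 1)) * A1fn k r) r := by
  exact period_hasDerivAt' k hk
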